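/- arXiv:1204.1743 — 2 statements merged into one kernel-verified Lean document; each statement's English description precedes it below -/
import Mathlib

section
/- Let p > 3 be a prime and let a, b ∈ ℚ_p be nonzero with |b|_p < |a|_p = 1 and (−a_0)^{(p−1)/2} ≡ 1 (mod p), where a_0 is the first digit of a. Then the equation x³ + ax = b has exactly 2 solutions x in ℤ_p^*, i.e. the set {x ∈ ℚ_p : |x|_p = 1 and x³ + ax = b} has exactly 2 elements. -/
/-!
Over `ℤ_[p]`, `x³ + a x = b` reduces modulo `p` to `t (t² + ā) = 0`, whose nonzero roots are
the two square roots `±u` of `-ā`; these exist by Euler's criterion and are distinct as `p` is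
odd. Each is a simple root, since the derivative there is `3u² + ā = 2u² ≠ 0`, so by Hensel's
lemma it lifts to exactly one unit root in `ℤ_[p]`, and every unit root arises this way.
-/

/-- `x0` is the first digit of the nonzero `p`-adic number `x`: the unique integer in
`{1, …, p-1}` congruent modulo `p` to the unit part `x* = x·|x|_p = x·p^{-v_p(x)}`. -/
def isFirstDigit (p : ℕ) [Fact p.Prime] (x : ℚ_[p]) (x0 : ℤ) : Prop :=
  1 ≤ x0 ∧ x0 ≤ (p : ℤ) - 1 ∧ ‖x * (p : ℚ_[p]) ^ (-x.valuation) - (x0 : ℚ_[p])‖ < 1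

open Polynomial

theorem eq_or_eq_neg_of_pow_three_add_mul_eq_zero {R : Type*} [CommRing R] [NoZeroDivisors R]
    {a t u : R} (ht : t ^ 3 + a * t = 0) (ht0 : t ≠ 0) (hu : u * u = -a) : t = u ∨ t = -u := by
  have hsq : t * t + a = 0 :=
    (mul_eq_zero.1 (by linear_combination ht : t * (t * t + a) = 0)).resolve_left ht0
  exact mul_self_eq_mul_self_iff.1 (by linear_combination hsq - hu)

theorem ZMod.ne_zero_and_isSquare_of_pow_modEq_one {p : ℕ} [Fact p.Prime] (hp : p ≠ 2) {n : ℤ}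
    (h : n ^ ((p - 1) / 2) ≡ 1 [ZMOD p]) : (n : ZMod p) ≠ 0 ∧ IsSquare (n : ZMod p) := by
  have hp3 : 3 ≤ p := by have := (Fact.out : p.Prime).two_le; omega
  have hodd : p % 2 = 1 := Nat.odd_iff.1 ((Fact.out : p.Prime).odd_of_ne_two hp)
  have hpow : (n : ZMod p) ^ (p / 2) = 1 := by
    rw [show p / 2 = (p - 1) / 2 by omega]
    exact_mod_cast (ZMod.intCast_eq_intCast_iff _ _ _).2 h
  have hn : (n : ZMod p) ≠ 0 := by
    intro h0
    rw [h0, zero_pow (by omega)] at hpow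
    exact zero_ne_one hpow
  exact ⟨hn, (ZMod.euler_criterion p hn).2 hpow⟩

namespace PadicInt

variable {p : ℕ} [Fact p.Prime]

theorem toZMod_eq_zero_iff (x : ℤ_[p]) : toZMod x = 0 ↔ ‖x‖ < 1 := by
  rw [← RingHom.mem_ker, ker_toZMod, IsLocalRing.mem_maximalIdeal, mem_nonunits]

theorem toZMod_eq_toZMod_iff (x y : ℤ_[p]) : toZMod x = toZMod y ↔ ‖x - y‖ < 1 := by
  rw [← sub_eq_zero, ← map_sub, toZMod_eq_zero_iff]

theorem norm_eq_one_iff_toZMod_ne_zero (x : ℤ_[p]) : ‖x‖ = 1 ↔ toZMod x ≠ 0 := by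
  rw [ne_eq, toZMod_eq_zero_iff, not_lt]
  exact ⟨ge_of_eq, x.norm_le_one.antisymm⟩

theorem existsUnique_root_toZMod_eq {F : ℤ_[p][X]} {c : ℤ_[p]}
    (hFc : toZMod (F.eval c) = 0) (hF'c : toZMod (F.derivative.eval c) ≠ 0) :
    ∃! z : ℤ_[p], F.eval z = 0 ∧ toZMod z = toZMod c := by
  have hF' : ‖F.derivative.eval c‖ = 1 := (norm_eq_one_iff_toZMod_ne_zero _).2 hF'c
  have hF : ‖F.eval c‖ < ‖F.derivative.eval c‖ ^ 2 := by
    rwa [hF', one_pow, ← toZMod_eq_zero_iff]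
  obtain ⟨z, hz, hzc, -, huniq⟩ := hensels_lemma (F := F) (a := c)
    (by simpa only [coe_aeval_eq_eval] using hF)
  simp only [coe_aeval_eq_eval, hF'] at hz hzc huniq
  refine ⟨z, ⟨hz, (toZMod_eq_toZMod_iff z c).2 hzc⟩, fun z' ⟨hz', hz'c⟩ => ?_⟩
  exact huniq z' hz' ((toZMod_eq_toZMod_iff z' c).1 hz'c)

theorem existsUnique_cubic_root_toZMod_eq (hp : p ≠ 2) {A B : ℤ_[p]} (hB : toZMod B = 0)
    {w : ZMod p} (hw : w * w = -toZMod A) (hw0 : w ≠ 0) :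
    ∃! z : ℤ_[p], z ^ 3 + A * z = B ∧ toZMod z = w := by
  obtain ⟨c, rfl⟩ := ZMod.ringHom_surjective toZMod w
  have h2 : (2 : ZMod p) ≠ 0 := Ring.two_ne_zero (by rwa [ZMod.ringChar_zmod_n])
  have hroot := existsUnique_root_toZMod_eq (F := X ^ 3 + C A * X - C B) (c := c)
    (by simp only [eval_sub, eval_add, eval_mul, eval_pow, eval_X, eval_C, map_sub, map_add,
          map_mul, map_pow, hB]
        linear_combination toZMod c * hw)
    (by have hder : (X ^ 3 + C A * X - C B).derivative.eval c = 3 * c ^ 2 + A := by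
          simp only [derivative_sub, derivative_add, derivative_X_pow, derivative_C_mul_X,
            derivative_C, eval_add, eval_mul, eval_pow, eval_C, eval_X, sub_zero]
          norm_num
        rw [hder, map_add, map_mul, map_pow, map_ofNat]
        intro h
        exact mul_ne_zero h2 (mul_ne_zero hw0 hw0) (by linear_combination h - hw))
  simpa only [eval_sub, eval_add, eval_mul, eval_pow, eval_X, eval_C, sub_eq_zero] using hroot

theorem ncard_unit_cubic_roots (hp : p ≠ 2) {A B : ℤ_[p]} (hB : ‖B‖ < 1)
    (hA0 : toZMod A ≠ 0) (hA : IsSquare (-toZMod A)) :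
    {z : ℤ_[p] | ‖z‖ = 1 ∧ z ^ 3 + A * z = B}.ncard = 2 := by
  obtain ⟨u, hu⟩ := hA
  have hu0 : u ≠ 0 := by
    rintro rfl
    exact hA0 (neg_eq_zero.1 (by rw [hu, mul_zero]))
  have hB0 : toZMod B = 0 := (toZMod_eq_zero_iff B).2 hB
  obtain ⟨z₁, ⟨hz₁, hz₁u⟩, huniq₁⟩ := existsUnique_cubic_root_toZMod_eq hp hB0 hu.symm hu0
  obtain ⟨z₂, ⟨hz₂, hz₂u⟩, huniq₂⟩ := existsUnique_cubic_root_toZMod_eq hp hB0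
    (by rw [neg_mul_neg, hu]) (neg_ne_zero.2 hu0)
  have hset : {z : ℤ_[p] | ‖z‖ = 1 ∧ z ^ 3 + A * z = B} = {z₁, z₂} := by
    ext z
    simp only [Set.mem_ofPred_eq, Set.mem_insert_iff, Set.mem_singleton_iff]
    constructor
    · rintro ⟨hz1, hz⟩
      have hred : toZMod z ^ 3 + toZMod A * toZMod z = 0 := by
        simpa [hB0] using congrArg toZMod hz
      rcases eq_or_eq_neg_of_pow_three_add_mul_eq_zero hred
          ((norm_eq_one_iff_toZMod_ne_zero z).1 hz1) hu.symm with h | h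
      · exact Or.inl (huniq₁ z ⟨hz, h⟩)
      · exact Or.inr (huniq₂ z ⟨hz, h⟩)
    · rintro (rfl | rfl)
      · exact ⟨(norm_eq_one_iff_toZMod_ne_zero _).2 (hz₁u ▸ hu0), hz₁⟩
      · exact ⟨(norm_eq_one_iff_toZMod_ne_zero _).2 (hz₂u ▸ neg_ne_zero.2 hu0), hz₂⟩
  rw [hset, Set.ncard_pair]
  rintro rfl
  exact ZMod.ne_neg_self ((Fact.out : p.Prime).odd_of_ne_two hp) hu0 (hz₁u.symm.trans hz₂u)

theorem ncard_padic_unit_cubic_roots (A B : ℤ_[p]) :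
    {x : ℚ_[p] | ‖x‖ = 1 ∧ x ^ 3 + A * x = B}.ncard =
      {z : ℤ_[p] | ‖z‖ = 1 ∧ z ^ 3 + A * z = B}.ncard := by
  have himage : {x : ℚ_[p] | ‖x‖ = 1 ∧ x ^ 3 + A * x = B} =
      (↑) '' {z : ℤ_[p] | ‖z‖ = 1 ∧ z ^ 3 + A * z = B} := by
    ext x
    constructor
    · rintro ⟨hx1, hx⟩
      exact ⟨⟨x, hx1.le⟩, ⟨hx1, Subtype.ext (by push_cast; exact hx)⟩, rfl⟩
    · rintro ⟨z, ⟨hz1, hz⟩, rfl⟩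
      exact ⟨hz1, by simpa using congrArg ((↑) : ℤ_[p] → ℚ_[p]) hz⟩
  rw [himage]
  exact Set.ncard_image_of_injective _ Subtype.val_injective

end PadicInt

theorem Padic.norm_sub_lt_one_of_isFirstDigit {p : ℕ} [Fact p.Prime] {x : ℚ_[p]} {x0 : ℤ}
    (hx : ‖x‖ = 1) (h : isFirstDigit p x x0) : ‖x - x0‖ < 1 := by
  have hv : x.valuation = 0 := by
    have hinv := (Padic.norm_le_one_iff_val_nonneg x⁻¹).1 (by rw [norm_inv, hx, inv_one])
    rw [Padic.valuation_inv] at hinv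
    have := (Padic.norm_le_one_iff_val_nonneg x).1 hx.le
    omega
  simpa [hv] using h.2.2

theorem cubic_two_unit_solutions_of_gt_general (p : ℕ) [Fact p.Prime] (hp : 3 < p)
    (a b : ℚ_[p])
    (hab : ‖b‖ < ‖a‖) (ha1 : ‖a‖ = 1)
    (a0 : ℤ) (ha0 : isFirstDigit p a a0)
    (hres : Int.ModEq (p : ℤ) ((-a0) ^ ((p - 1) / 2)) 1) :
    {x : ℚ_[p] | ‖x‖ = 1 ∧ x ^ 3 + a * x = b}.ncard = 2 := by
  have hp2 : p ≠ 2 := by omega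
  obtain ⟨A, rfl⟩ : ∃ A : ℤ_[p], (A : ℚ_[p]) = a := ⟨⟨a, ha1.le⟩, rfl⟩
  obtain ⟨B, rfl⟩ : ∃ B : ℤ_[p], (B : ℚ_[p]) = b := ⟨⟨b, (hab.trans_eq ha1).le⟩, rfl⟩
  have hA : PadicInt.toZMod A = a0 := by
    rw [← map_intCast PadicInt.toZMod, PadicInt.toZMod_eq_toZMod_iff, PadicInt.norm_def]
    exact_mod_cast Padic.norm_sub_lt_one_of_isFirstDigit ha1 ha0
  simp only [← PadicInt.norm_def] at hab ha1
  obtain ⟨hA0, hAsq⟩ := ZMod.ne_zero_and_isSquare_of_pow_modEq_one hp2 hres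
  push_cast at hA0 hAsq
  rw [PadicInt.ncard_padic_unit_cubic_roots]
  exact PadicInt.ncard_unit_cubic_roots hp2 (hab.trans_eq ha1) (by rwa [hA, ← neg_ne_zero])
    (by rwa [hA])

theorem cubic_two_unit_solutions_of_gt (p : ℕ) [Fact p.Prime] (hp : 3 < p)
    (a b : ℚ_[p]) (ha : a ≠ 0) (hb : b ≠ 0)
    (hab : ‖b‖ < ‖a‖) (ha1 : ‖a‖ = 1)
    (a0 : ℤ) (ha0 : isFirstDigit p a a0)
    (hres : Int.ModEq (p : ℤ) ((-a0) ^ ((p - 1) / 2)) 1) :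
    {x : ℚ_[p] | ‖x‖ = 1 ∧ x ^ 3 + a * x = b}.ncard = 2 :=
  cubic_two_unit_solutions_of_gt_general p hp a b hab ha1 a0 ha0 hres
end

section
/- Let p > 3 be a prime and let a, b ∈ ℚ_p be nonzero with |a|_p³ > |b|_p², the p-adic valuation v_p(a) even, and (−a_0)^{(p−1)/2} ≡ 1 (mod p), where a_0 is the first digit of a. Then the equation x³ + ax = b has exactly 3 solutions x in ℚ_p, i.e. the set {x ∈ ℚ_p : x³ + ax = b} has exactly 3 elements. -/
open Polynomial

theorem ZMod.two_ne_zero_of_ne_two {p : ℕ} [Fact p.Prime] (hp : p ≠ 2) : (2 : ZMod p) ≠ 0 :=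
  Ring.two_ne_zero (by rwa [ZMod.ringChar_zmod_n])

theorem setOf_cube_add_mul_eq_image {K : Type*} [Field K] {a b c : K} (hc : c ≠ 0)
    (ha : -a = c * c) :
    {x : K | x ^ 3 + a * x = b} = (c * ·) '' {z : K | z ^ 3 - z = b / c ^ 3} := by
  have ha' : a = -(c * c) := by linear_combination -ha
  ext x
  simp only [Set.mem_ofPred_eq, Set.mem_image]
  constructor
  · intro hx
    refine ⟨x / c, ?_, by field_simp⟩
    field_simp
    linear_combination hx - x * ha'
  · rintro ⟨z, hz, rfl⟩
    field_simp at hz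
    linear_combination hz + c * z * ha'

namespace PadicInt

variable {p : ℕ} [Fact p.Prime]

instance : HenselianLocalRing ℤ_[p] where
  is_henselian f hf a₀ h₁ h₂ := HenselianRing.is_henselian f hf a₀ h₁ (h₂.map _)

theorem toZMod_eq_zero_iff_norm_lt_one {x : ℤ_[p]} : toZMod x = 0 ↔ ‖x‖ < 1 := by
  rw [← RingHom.mem_ker, ker_toZMod, IsLocalRing.mem_maximalIdeal, mem_nonunits]

theorem toZMod_eq_toZMod_of_norm_sub_lt_one {x y : ℤ_[p]} (h : ‖x - y‖ < 1) :
    toZMod x = toZMod y := by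
  rwa [← sub_eq_zero, ← map_sub, toZMod_eq_zero_iff_norm_lt_one]

theorem exists_isRoot_toZMod_eq {f : ℤ_[p][X]} (hf : f.Monic) {α : ZMod p}
    (hroot : f.eval₂ toZMod α = 0) (hsimple : f.derivative.eval₂ toZMod α ≠ 0) :
    ∃ z : ℤ_[p], f.IsRoot z ∧ toZMod z = α := by
  have lift := (HenselianLocalRing.TFAE ℤ_[p]).out 0 2
  exact lift.mp inferInstance toZMod (ZMod.ringHom_surjective _) f hf α hroot hsimple

theorem isSquare_of_pow_toZMod_eq_one (hp : p ≠ 2) {u : ℤ_[p]} (h : toZMod u ^ (p / 2) = 1) :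
    IsSquare u := by
  have hu : toZMod u ≠ 0 := by
    rintro hu
    rw [hu, zero_pow (Nat.div_pos (Fact.out : p.Prime).two_le two_pos).ne'] at h
    exact zero_ne_one h
  obtain ⟨y, hy⟩ := (ZMod.euler_criterion p hu).2 h
  have hy0 : y ≠ 0 := by rintro rfl; simp_all
  obtain ⟨s, hs, -⟩ := exists_isRoot_toZMod_eq (f := X ^ 2 - C u) (α := y)
    (monic_X_pow_sub_C _ two_ne_zero) (by simp [hy, sq])
    (by simpa [← two_mul, map_ofNat] using mul_ne_zero (ZMod.two_ne_zero_of_ne_two hp) hy0)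
  exact ⟨s, by simpa [sub_eq_zero, sq, eq_comm] using hs⟩

theorem exists_cube_sub_self_eq (hp : p ≠ 2) {t : ℤ_[p]} (ht : toZMod t = 0) {α : ZMod p}
    (hα : α ^ 3 = α) : ∃ z : ℤ_[p], z ^ 3 - z = t ∧ toZMod z = α := by
  have hsimple : 3 * α ^ 2 - 1 ≠ 0 := by
    intro h
    have hα0 : α = 0 := by
      simpa [ZMod.two_ne_zero_of_ne_two hp] using
        (by linear_combination α * h - 3 * hα : 2 * α = 0)
    simp [hα0] at h
  have hmonic : (X ^ 3 - X - C t : ℤ_[p][X]).Monic := by monicity!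
  obtain ⟨z, hz, hzα⟩ := exists_isRoot_toZMod_eq (α := α) hmonic (by simp [ht, hα])
    (by simpa [map_ofNat, show (2 : ZMod p) + 1 = 3 by norm_num] using hsimple)
  exact ⟨z, sub_eq_iff_eq_add'.2 (by simpa [sub_eq_zero, sub_sub] using hz), hzα⟩

end PadicInt

namespace Padic

variable {p : ℕ} [Fact p.Prime]

theorem norm_mul_zpow_neg_valuation {x : ℚ_[p]} (hx : x ≠ 0) :
    ‖x * (p : ℚ_[p]) ^ (-x.valuation)‖ = 1 := by
  rw [norm_mul, norm_eq_zpow_neg_valuation hx, norm_p_zpow, neg_neg,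
    ← zpow_add₀ (by exact_mod_cast (Fact.out : p.Prime).ne_zero), neg_add_cancel, zpow_zero]

theorem isSquare_neg_of_isFirstDigit (hp : p ≠ 2) {a : ℚ_[p]} (ha : a ≠ 0)
    (hval : 2 ∣ a.valuation) {a0 : ℤ} (ha0 : isFirstDigit p a a0)
    (hres : (-a0) ^ ((p - 1) / 2) ≡ 1 [ZMOD p]) : IsSquare (-a) := by
  let u : ℤ_[p] := ⟨a * (p : ℚ_[p]) ^ (-a.valuation), (norm_mul_zpow_neg_valuation ha).le⟩
  have hu : PadicInt.toZMod u = a0 := by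
    rw [← map_intCast PadicInt.toZMod a0]
    exact PadicInt.toZMod_eq_toZMod_of_norm_sub_lt_one ha0.2.2
  have hp_odd : p % 2 = 1 := Nat.odd_iff.mp ((Fact.out : p.Prime).odd_of_ne_two hp)
  have hsq : IsSquare (-u) := by
    refine PadicInt.isSquare_of_pow_toZMod_eq_one hp ?_
    rw [map_neg, hu, show p / 2 = (p - 1) / 2 by omega]
    exact_mod_cast (ZMod.intCast_eq_intCast_iff _ _ p).2 hres
  obtain ⟨m, hm⟩ := hval
  have hp0 : (p : ℚ_[p]) ≠ 0 := by exact_mod_cast (Fact.out : p.Prime).ne_zero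
  have hfactor : -a = -(u : ℚ_[p]) * ((p : ℚ_[p]) ^ m * (p : ℚ_[p]) ^ m) := by
    have hcancel : (p : ℚ_[p]) ^ (-(2 * m)) * ((p : ℚ_[p]) ^ m * (p : ℚ_[p]) ^ m) = 1 := by
      rw [← zpow_add₀ hp0, ← zpow_add₀ hp0, show -(2 * m) + (m + m) = 0 by ring, zpow_zero]
    simp only [u, hm]
    linear_combination a * hcancel
  rw [hfactor]
  exact (hsq.map PadicInt.Coe.ringHom).mul ⟨_, rfl⟩

theorem ncard_setOf_cube_sub_self_eq (hp : p ≠ 2) {t : ℚ_[p]} (ht : ‖t‖ < 1) :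
    {z : ℚ_[p] | z ^ 3 - z = t}.ncard = 3 := by
  have hdeg : (X ^ 3 - X - C t).natDegree = 3 := by compute_degree!
  have hf0 : (X ^ 3 - X - C t) ≠ 0 := fun h => by simp [h] at hdeg
  have hS : {z : ℚ_[p] | z ^ 3 - z = t} = (X ^ 3 - X - C t).rootSet ℚ_[p] := by
    ext z
    simp [mem_rootSet, hf0, sub_eq_zero]
  have hT : PadicInt.toZMod (⟨t, ht.le⟩ : ℤ_[p]) = 0 :=
    PadicInt.toZMod_eq_zero_iff_norm_lt_one.2 ht
  obtain ⟨z₀, hz₀, h₀⟩ := PadicInt.exists_cube_sub_self_eq hp hT (α := 0) (by ring)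
  obtain ⟨z₁, hz₁, h₁⟩ := PadicInt.exists_cube_sub_self_eq hp hT (α := 1) (by ring)
  obtain ⟨z₂, hz₂, h₂⟩ := PadicInt.exists_cube_sub_self_eq hp hT (α := -1) (by ring)
  have hne : ∀ {z w : ℤ_[p]}, PadicInt.toZMod z ≠ PadicInt.toZMod w → (z : ℚ_[p]) ≠ w :=
    fun h hzw => h (congrArg _ (Subtype.ext hzw))
  have hthree : ({(z₀ : ℚ_[p]), (z₁ : ℚ_[p]), (z₂ : ℚ_[p])} : Set ℚ_[p]).ncard = 3 := by
    refine Set.ncard_eq_three.2 ⟨_, _, _, hne ?_, hne ?_, hne ?_, rfl⟩ <;> simp only [h₀, h₁, h₂]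
    · exact zero_ne_one
    · exact (neg_ne_zero.2 one_ne_zero).symm
    · exact fun h => ZMod.two_ne_zero_of_ne_two hp (by linear_combination h)
  have hcoe : ∀ z : ℤ_[p], z ^ 3 - z = ⟨t, ht.le⟩ → (z : ℚ_[p]) ^ 3 - z = t :=
    fun z hz => by exact_mod_cast congrArg Subtype.val hz
  have hroots : {(z₀ : ℚ_[p]), (z₁ : ℚ_[p]), (z₂ : ℚ_[p])} ⊆ {z : ℚ_[p] | z ^ 3 - z = t} := by
    rintro _ (rfl | rfl | rfl)
    exacts [hcoe _ hz₀, hcoe _ hz₁, hcoe _ hz₂]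
  rw [hS] at hroots ⊢
  exact le_antisymm ((ncard_rootSet_le _ _).trans hdeg.le)
    (hthree.ge.trans (Set.ncard_le_ncard hroots (rootSet_finite _ _)))

end Padic

theorem cubic_three_solutions_of_gt_general (p : ℕ) [Fact p.Prime] (hp : 3 < p)
    (a b : ℚ_[p]) (ha : a ≠ 0)
    (hab : ‖b‖ ^ 2 < ‖a‖ ^ 3)
    (hval : (2 : ℤ) ∣ a.valuation)
    (a0 : ℤ) (ha0 : isFirstDigit p a a0)
    (hres : Int.ModEq (p : ℤ) ((-a0) ^ ((p - 1) / 2)) 1) :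
    {x : ℚ_[p] | x ^ 3 + a * x = b}.ncard = 3 := by
  have hp2 : p ≠ 2 := by omega
  obtain ⟨c, hc⟩ := Padic.isSquare_neg_of_isFirstDigit hp2 ha hval ha0 hres
  have hc0 : c ≠ 0 := by rintro rfl; simp_all
  have hac : ‖a‖ = ‖c‖ ^ 2 := by rw [← norm_neg a, hc, norm_mul, sq]
  have hbc : ‖b / c ^ 3‖ < 1 := by
    rw [norm_div, norm_pow, div_lt_one (by positivity)]
    exact lt_of_pow_lt_pow_left₀ 2 (by positivity) (hab.trans_eq (by rw [hac]; ring))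
  rw [setOf_cube_add_mul_eq_image hc0 hc,
    Set.ncard_image_of_injective _ (mul_right_injective₀ hc0),
    Padic.ncard_setOf_cube_sub_self_eq hp2 hbc]

theorem cubic_three_solutions_of_gt (p : ℕ) [Fact p.Prime] (hp : 3 < p)
    (a b : ℚ_[p]) (ha : a ≠ 0) (hb : b ≠ 0)
    (hab : ‖b‖ ^ 2 < ‖a‖ ^ 3)
    (hval : (2 : ℤ) ∣ a.valuation)
    (a0 : ℤ) (ha0 : isFirstDigit p a a0)
    (hres : Int.ModEq (p : ℤ) ((-a0) ^ ((p - 1) / 2)) 1) :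
    {x : ℚ_[p] | x ^ 3 + a * x = b}.ncard = 3 :=
  cubic_three_solutions_of_gt_general p hp a b ha hab hval a0 ha0 hres
end
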